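/- Let X ∈ ℝ^{n×d} have rows x_1ᵀ, …, x_nᵀ with ‖x_i‖₂ = 1 for all i, let β*, β ∈ ℝ^d, let y ∈ ℝ^n, and set ε = y − Xβ*. For 1 ≤ k ≤ n define ψ⁻(k) = min_{T: |T|=k} λ_min(Σ_{i∈T} x_i x_iᵀ) and ψ⁺(k) = max_{T: |T|=k} λ_max(Σ_{i∈T} x_i x_iᵀ). Let 1 ≤ m ≤ n with ψ⁻(m) > 0, and let S ⊆ {1,…,n} with |S| = m satisfy (y_i − x_iᵀβ)² ≤ (y_j − x_jᵀβ)² for every i ∈ S and j ∉ S. Let β' = (X_Sᵀ X_S)^{-1} X_Sᵀ y_S be the least squares estimate on S. Then for any subset S* ⊆ {1,…,n} with |S*| = m: ‖β' − β*‖₂ ≤ (2·ψ⁺(|S \ S*|)/ψ⁻(m))·‖β − β*‖₂ + (Σ_{i∈S*} |ε_i|)/ψ⁻(m). -/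

import Mathlib

set_option autoImplicit false

open Finset

/-- The largest eigenvalue of a matrix. -/
noncomputable def lambdaMax {d : ℕ} (M : Matrix (Fin d) (Fin d) ℝ) : ℝ :=
  sSup {r : ℝ | ∃ v : Fin d → ℝ, v ≠ 0 ∧ M.mulVec v = r • v}

/-- The smallest eigenvalue of a matrix. -/
noncomputable def lambdaMin {d : ℕ} (M : Matrix (Fin d) (Fin d) ℝ) : ℝ :=
  sInf {r : ℝ | ∃ v : Fin d → ℝ, v ≠ 0 ∧ M.mulVec v = r • v}

/-- The Gram matrix `∑_{i ∈ S} x_i x_iᵀ` of a subset of the sample points. -/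
noncomputable def gramMatrix {n d : ℕ} (x : Fin n → EuclideanSpace ℝ (Fin d))
    (S : Finset (Fin n)) : Matrix (Fin d) (Fin d) ℝ :=
  ∑ i ∈ S, Matrix.of fun j k => x i j * x i k

/-- `ψ⁺(k)`: the maximum over all size-`k` subsets `T` of the largest eigenvalue
of `∑_{i ∈ T} x_i x_iᵀ`. -/
noncomputable def psiPlus {n d : ℕ} (x : Fin n → EuclideanSpace ℝ (Fin d)) (k : ℕ) : ℝ :=
  sSup {r : ℝ | ∃ T : Finset (Fin n), T.card = k ∧ r = lambdaMax (gramMatrix x T)}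

/-- `ψ⁻(k)`: the minimum over all size-`k` subsets `T` of the smallest eigenvalue
of `∑_{i ∈ T} x_i x_iᵀ`. -/
noncomputable def psiMinus {n d : ℕ} (x : Fin n → EuclideanSpace ℝ (Fin d)) (k : ℕ) : ℝ :=
  sInf {r : ℝ | ∃ T : Finset (Fin n), T.card = k ∧ r = lambdaMin (gramMatrix x T)}

/-!
Write `δ = β' - β*` and `Δ = β - β*`. The normal equations give `X_Sᵀ X_S δ = X_Sᵀ ε_S`, hence
`ψ⁻(m) ‖δ‖² ≤ ∑_{i ∈ S} ε_i ⟪x_i, δ⟫`. On `S ∩ S*` each term is at most `|ε_i| ‖δ‖`. The sets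
`S \ S*` and `S* \ S` have the same size, so they can be matched; by the trimming rule the residual
`ε_i - ⟪x_i, Δ⟫` of `i ∈ S \ S*` is dominated by that of its partner `j ∈ S* \ S`, which is at most
`|ε_j| + |⟪x_j, Δ⟫|`. What remains are two sums of products `⟪x_·, Δ⟫ ⟪x_i, δ⟫` over index sets of
size `|S \ S*|`, each at most `ψ⁺(|S \ S*|) ‖Δ‖ ‖δ‖` by Cauchy–Schwarz.
-/

open RealInnerProductSpace

namespace Matrix.IsHermitian

section
variable {ι : Type*} [Fintype ι] [DecidableEq ι] {M : Matrix ι ι ℝ}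

lemma eigenvalueSet_subset_range (hM : M.IsHermitian) :
    {r : ℝ | ∃ v : ι → ℝ, v ≠ 0 ∧ M *ᵥ v = r • v} ⊆ Set.range hM.eigenvalues := by
  rintro r ⟨v, hv, hMv⟩
  rw [← hM.spectrum_real_eq_range_eigenvalues, spectrum.mem_iff, Matrix.isUnit_iff_isUnit_det,
    isUnit_iff_ne_zero, not_not, ← Matrix.exists_mulVec_eq_zero_iff]
  exact ⟨v, hv, by simp [sub_mulVec, hMv, Algebra.algebraMap_eq_smul_one, smul_mulVec]⟩

lemma toEuclideanLin_eigenvectorBasis (hM : M.IsHermitian) (j : ι) :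
    M.toEuclideanLin (hM.eigenvectorBasis j) = hM.eigenvalues j • hM.eigenvectorBasis j :=
  congrArg (WithLp.toLp 2) (hM.mulVec_eigenvectorBasis j)

lemma inner_toEuclideanLin_self (hM : M.IsHermitian) (v : EuclideanSpace ℝ ι) :
    ⟪M.toEuclideanLin v, v⟫ = ∑ j, hM.eigenvalues j * ⟪hM.eigenvectorBasis j, v⟫ ^ 2 := by
  rw [← hM.eigenvectorBasis.sum_inner_mul_inner]
  refine Finset.sum_congr rfl fun j _ => ?_
  rw [isSymmetric_toEuclideanLin_iff.mpr hM, hM.toEuclideanLin_eigenvectorBasis,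
    real_inner_smul_right, real_inner_comm]
  ring

end

section
variable {d : ℕ} {M : Matrix (Fin d) (Fin d) ℝ}

lemma eigenvalues_le_lambdaMax (hM : M.IsHermitian) (j : Fin d) :
    hM.eigenvalues j ≤ lambdaMax M :=
  le_csSup ((Set.finite_range _).subset hM.eigenvalueSet_subset_range).bddAbove
    ⟨_, by simpa using hM.eigenvectorBasis.orthonormal.ne_zero j, hM.mulVec_eigenvectorBasis j⟩

lemma lambdaMin_le_eigenvalues (hM : M.IsHermitian) (j : Fin d) :
    lambdaMin M ≤ hM.eigenvalues j :=
  csInf_le ((Set.finite_range _).subset hM.eigenvalueSet_subset_range).bddBelow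
    ⟨_, by simpa using hM.eigenvectorBasis.orthonormal.ne_zero j, hM.mulVec_eigenvectorBasis j⟩

lemma inner_toEuclideanLin_self_le (hM : M.IsHermitian) (v : EuclideanSpace ℝ (Fin d)) :
    ⟪M.toEuclideanLin v, v⟫ ≤ lambdaMax M * ‖v‖ ^ 2 := by
  rw [hM.inner_toEuclideanLin_self, ← hM.eigenvectorBasis.sum_sq_inner_right v, Finset.mul_sum]
  gcongr with j
  exact hM.eigenvalues_le_lambdaMax j

lemma le_inner_toEuclideanLin_self (hM : M.IsHermitian) (v : EuclideanSpace ℝ (Fin d)) :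
    lambdaMin M * ‖v‖ ^ 2 ≤ ⟪M.toEuclideanLin v, v⟫ := by
  rw [hM.inner_toEuclideanLin_self, ← hM.eigenvectorBasis.sum_sq_inner_right v, Finset.mul_sum]
  gcongr with j
  exact hM.lambdaMin_le_eigenvalues j

end

end Matrix.IsHermitian

lemma Matrix.PosSemidef.lambdaMax_nonneg {d : ℕ} {M : Matrix (Fin d) (Fin d) ℝ}
    (hM : M.PosSemidef) : 0 ≤ lambdaMax M :=
  Real.sSup_nonneg fun _ hr => by
    obtain ⟨j, rfl⟩ := hM.isHermitian.eigenvalueSet_subset_range hr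
    exact hM.eigenvalues_nonneg j

section gramMatrix
variable {n d : ℕ} (x : Fin n → EuclideanSpace ℝ (Fin d))

lemma toEuclideanLin_gramMatrix (T : Finset (Fin n)) (v : EuclideanSpace ℝ (Fin d)) :
    (gramMatrix x T).toEuclideanLin v = ∑ i ∈ T, ⟪x i, v⟫ • x i := by
  ext j
  simp [gramMatrix, Matrix.mulVec, dotProduct, PiLp.inner_apply, Finset.mul_sum, mul_comm,
    mul_left_comm]

lemma gramMatrix_posSemidef (T : Finset (Fin n)) : (gramMatrix x T).PosSemidef :=
  Matrix.posSemidef_sum _ fun i _ => by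
    simpa [Matrix.vecMulVec] using Matrix.posSemidef_vecMulVec_self_star (WithLp.ofLp (x i))

lemma inner_gramMatrix_self (T : Finset (Fin n)) (v : EuclideanSpace ℝ (Fin d)) :
    ⟪(gramMatrix x T).toEuclideanLin v, v⟫ = ∑ i ∈ T, ⟪x i, v⟫ ^ 2 := by
  simp [toEuclideanLin_gramMatrix, sum_inner, real_inner_smul_left, sq]

end gramMatrix

section psi
variable {n d : ℕ} (x : Fin n → EuclideanSpace ℝ (Fin d))

lemma sum_inner_sq_le_psiPlus (T : Finset (Fin n)) (v : EuclideanSpace ℝ (Fin d)) :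
    ∑ i ∈ T, ⟪x i, v⟫ ^ 2 ≤ psiPlus x T.card * ‖v‖ ^ 2 := by
  have hT : lambdaMax (gramMatrix x T) ≤ psiPlus x T.card :=
    le_csSup ((Set.finite_range fun T => lambdaMax (gramMatrix x T)).subset
      (by rintro _ ⟨T, -, rfl⟩; exact ⟨T, rfl⟩)).bddAbove ⟨T, rfl, rfl⟩
  calc ∑ i ∈ T, ⟪x i, v⟫ ^ 2 ≤ lambdaMax (gramMatrix x T) * ‖v‖ ^ 2 := by
        rw [← inner_gramMatrix_self]
        exact (gramMatrix_posSemidef x T).isHermitian.inner_toEuclideanLin_self_le v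
    _ ≤ psiPlus x T.card * ‖v‖ ^ 2 := by gcongr

lemma psiMinus_le_sum_inner_sq (T : Finset (Fin n)) (v : EuclideanSpace ℝ (Fin d)) :
    psiMinus x T.card * ‖v‖ ^ 2 ≤ ∑ i ∈ T, ⟪x i, v⟫ ^ 2 := by
  have hT : psiMinus x T.card ≤ lambdaMin (gramMatrix x T) :=
    csInf_le ((Set.finite_range fun T => lambdaMin (gramMatrix x T)).subset
      (by rintro _ ⟨T, -, rfl⟩; exact ⟨T, rfl⟩)).bddBelow ⟨T, rfl, rfl⟩
  calc psiMinus x T.card * ‖v‖ ^ 2 ≤ lambdaMin (gramMatrix x T) * ‖v‖ ^ 2 := by gcongr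
    _ ≤ ∑ i ∈ T, ⟪x i, v⟫ ^ 2 := by
        rw [← inner_gramMatrix_self]
        exact (gramMatrix_posSemidef x T).isHermitian.le_inner_toEuclideanLin_self v

lemma psiPlus_nonneg (k : ℕ) : 0 ≤ psiPlus x k :=
  Real.sSup_nonneg fun _ ⟨T, _, hr⟩ => hr ▸ (gramMatrix_posSemidef x T).lambdaMax_nonneg

lemma sqrt_sum_inner_sq_le (T : Finset (Fin n)) (v : EuclideanSpace ℝ (Fin d)) :
    √(∑ i ∈ T, ⟪x i, v⟫ ^ 2) ≤ √(psiPlus x T.card) * ‖v‖ := by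
  calc √(∑ i ∈ T, ⟪x i, v⟫ ^ 2) ≤ √(psiPlus x T.card * ‖v‖ ^ 2) :=
        Real.sqrt_le_sqrt (sum_inner_sq_le_psiPlus x T v)
    _ = √(psiPlus x T.card) * ‖v‖ := by
        rw [Real.sqrt_mul (psiPlus_nonneg x _), Real.sqrt_sq (norm_nonneg v)]

lemma sqrt_mul_sqrt_sum_inner_sq_le {T T' : Finset (Fin n)} (hcard : T'.card = T.card)
    (u v : EuclideanSpace ℝ (Fin d)) :
    √(∑ j ∈ T', ⟪x j, u⟫ ^ 2) * √(∑ i ∈ T, ⟪x i, v⟫ ^ 2) ≤ psiPlus x T.card * ‖u‖ * ‖v‖ := by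
  calc √(∑ j ∈ T', ⟪x j, u⟫ ^ 2) * √(∑ i ∈ T, ⟪x i, v⟫ ^ 2)
        ≤ (√(psiPlus x T.card) * ‖u‖) * (√(psiPlus x T.card) * ‖v‖) := by
          have hu := sqrt_sum_inner_sq_le x T' u
          rw [hcard] at hu
          exact mul_le_mul hu (sqrt_sum_inner_sq_le x T v) (Real.sqrt_nonneg _) (by positivity)
    _ = psiPlus x T.card * ‖u‖ * ‖v‖ := by
          rw [mul_mul_mul_comm, Real.mul_self_sqrt (psiPlus_nonneg x _)]; ring

end psi

lemma sum_sub_mul_le_of_card_eq {ι : Type*} {T T' : Finset ι} (hcard : T.card = T'.card)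
    {e b a : ι → ℝ} {A : ℝ} (hle : ∀ i ∈ T, ∀ j ∈ T', |e i - b i| ≤ |e j - b j|)
    (ha : ∀ i ∈ T, |a i| ≤ A) :
    ∑ i ∈ T, (e i - b i) * a i
      ≤ A * ∑ j ∈ T', |e j| + √(∑ j ∈ T', b j ^ 2) * √(∑ i ∈ T, a i ^ 2) := by
  obtain ⟨σ⟩ : Nonempty (T ≃ T') := Fintype.card_eq.mp (by simpa using hcard)
  have hterm : ∀ i : T, (e i - b i) * a i ≤ A * |e (σ i)| + |b (σ i)| * |a i| := fun i => by
    have hσ := hle i i.2 (σ i) (σ i).2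
    calc (e i - b i) * a i ≤ |e i - b i| * |a i| := by rw [← abs_mul]; exact le_abs_self _
      _ ≤ (|e (σ i)| + |b (σ i)|) * |a i| := by gcongr; exact hσ.trans (abs_sub _ _)
      _ ≤ A * |e (σ i)| + |b (σ i)| * |a i| := by
        rw [add_mul, mul_comm A]; gcongr; exact ha i i.2
  calc ∑ i ∈ T, (e i - b i) * a i = ∑ i : T, (e i - b i) * a i := (Finset.sum_coe_sort T _).symm
    _ ≤ ∑ i : T, (A * |e (σ i)| + |b (σ i)| * |a i|) := Finset.sum_le_sum fun i _ => hterm i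
    _ = A * ∑ j : T', |e j| + ∑ i : T, |b (σ i)| * |a i| := by
      rw [Finset.sum_add_distrib, ← Finset.mul_sum, Equiv.sum_comp σ fun j => |e j|]
    _ ≤ A * ∑ j : T', |e j| + √(∑ i : T, |b (σ i)| ^ 2) * √(∑ i : T, |a i| ^ 2) := by
      gcongr; exact Real.sum_mul_le_sqrt_mul_sqrt _ _ _
    _ = A * ∑ j ∈ T', |e j| + √(∑ j ∈ T', b j ^ 2) * √(∑ i ∈ T, a i ^ 2) := by
      simp only [sq_abs, Equiv.sum_comp σ fun j => b j ^ 2]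
      rw [Finset.sum_coe_sort T' fun j => |e j|, Finset.sum_coe_sort T' fun j => b j ^ 2,
        Finset.sum_coe_sort T fun i => a i ^ 2]

section leastSquares
variable {n d : ℕ} (x : Fin n → EuclideanSpace ℝ (Fin d))

lemma isUnit_det_gramMatrix {S : Finset (Fin n)} (hS : 0 < psiMinus x S.card) :
    IsUnit (gramMatrix x S).det := by
  rw [isUnit_iff_ne_zero, Ne, ← Matrix.exists_mulVec_eq_zero_iff]
  rintro ⟨v, hv, hGv⟩
  have hpos : 0 < ‖WithLp.toLp 2 v‖ := norm_pos_iff.mpr (by simpa using hv)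
  have hle := psiMinus_le_sum_inner_sq x S (WithLp.toLp 2 v)
  have hGv' : (gramMatrix x S).toEuclideanLin (WithLp.toLp 2 v) = 0 := congrArg (WithLp.toLp 2) hGv
  rw [← inner_gramMatrix_self, hGv', inner_zero_left] at hle
  have := mul_pos hS (pow_pos hpos 2)
  linarith

lemma toEuclideanLin_gramMatrix_eq_of_inv {S : Finset (Fin n)} (hS : 0 < psiMinus x S.card)
    {y : Fin n → ℝ} {β' : EuclideanSpace ℝ (Fin d)}
    (hβ' : ∀ j, β' j = (gramMatrix x S)⁻¹.mulVec (fun l => ∑ i ∈ S, y i * x i l) j) :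
    (gramMatrix x S).toEuclideanLin β' = ∑ i ∈ S, y i • x i := by
  have hβ'' : WithLp.ofLp β' = (gramMatrix x S)⁻¹.mulVec fun l => ∑ i ∈ S, y i * x i l :=
    funext hβ'
  ext l
  simp [Matrix.toEuclideanLin, hβ'', Matrix.mulVec_mulVec,
    Matrix.mul_nonsing_inv _ (isUnit_det_gramMatrix x hS)]

lemma psiMinus_mul_norm_sq_le {S : Finset (Fin n)} (hS : 0 < psiMinus x S.card)
    {y ε : Fin n → ℝ} {β' βstar : EuclideanSpace ℝ (Fin d)} (hε : ∀ i, ε i = y i - ⟪x i, βstar⟫)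
    (hβ' : ∀ j, β' j = (gramMatrix x S)⁻¹.mulVec (fun l => ∑ i ∈ S, y i * x i l) j) :
    psiMinus x S.card * ‖β' - βstar‖ ^ 2 ≤ ∑ i ∈ S, ε i * ⟪x i, β' - βstar⟫ := by
  have hnormal : (gramMatrix x S).toEuclideanLin (β' - βstar) = ∑ i ∈ S, ε i • x i := by
    rw [map_sub, toEuclideanLin_gramMatrix_eq_of_inv x hS hβ', toEuclideanLin_gramMatrix,
      ← Finset.sum_sub_distrib]
    simp only [hε, sub_smul]
  calc psiMinus x S.card * ‖β' - βstar‖ ^ 2 ≤ ∑ i ∈ S, ⟪x i, β' - βstar⟫ ^ 2 :=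
        psiMinus_le_sum_inner_sq x S _
    _ = ∑ i ∈ S, ε i * ⟪x i, β' - βstar⟫ := by
        rw [← inner_gramMatrix_self, hnormal, sum_inner]
        simp only [real_inner_smul_left]

end leastSquares

section trimming
variable {n d : ℕ} {x : Fin n → EuclideanSpace ℝ (Fin d)}

lemma sum_mul_inner_le_of_norm_eq_one (hx : ∀ i, ‖x i‖ = 1) (T : Finset (Fin n))
    (ε : Fin n → ℝ) (δ : EuclideanSpace ℝ (Fin d)) :
    ∑ i ∈ T, ε i * ⟪x i, δ⟫ ≤ ‖δ‖ * ∑ i ∈ T, |ε i| := by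
  rw [Finset.mul_sum]
  refine Finset.sum_le_sum fun i _ => ?_
  calc ε i * ⟪x i, δ⟫ ≤ |ε i| * |⟪x i, δ⟫| := by rw [← abs_mul]; exact le_abs_self _
    _ ≤ |ε i| * ‖δ‖ := by
        gcongr
        simpa [hx i] using abs_real_inner_le_norm (x i) δ
    _ = ‖δ‖ * |ε i| := mul_comm _ _

lemma sum_mul_inner_sdiff_le (hx : ∀ i, ‖x i‖ = 1) {S S' : Finset (Fin n)}
    (hcard : S.card = S'.card) (ε : Fin n → ℝ) (Δ δ : EuclideanSpace ℝ (Fin d))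
    (hsel : ∀ i ∈ S, ∀ j ∉ S, (ε i - ⟪x i, Δ⟫) ^ 2 ≤ (ε j - ⟪x j, Δ⟫) ^ 2) :
    ∑ i ∈ S \ S', ε i * ⟪x i, δ⟫
      ≤ ‖δ‖ * ∑ j ∈ S' \ S, |ε j| + 2 * psiPlus x (S \ S').card * ‖Δ‖ * ‖δ‖ := by
  have hcard' : (S' \ S).card = (S \ S').card := (Finset.card_sdiff_comm hcard).symm
  set P := psiPlus x (S \ S').card
  have hCS := sqrt_mul_sqrt_sum_inner_sq_le x (rfl : (S \ S').card = _) Δ δ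
  have hCS' := sqrt_mul_sqrt_sum_inner_sq_le x hcard' Δ δ
  have hresidual : ∑ i ∈ S \ S', (ε i - ⟪x i, Δ⟫) * ⟪x i, δ⟫
      ≤ ‖δ‖ * ∑ j ∈ S' \ S, |ε j|
        + √(∑ j ∈ S' \ S, ⟪x j, Δ⟫ ^ 2) * √(∑ i ∈ S \ S', ⟪x i, δ⟫ ^ 2) := by
    refine sum_sub_mul_le_of_card_eq hcard'.symm (fun i hi j hj => ?_) (fun i _ => ?_)
    · exact sq_le_sq.mp (hsel i (Finset.mem_sdiff.mp hi).1 j (Finset.mem_sdiff.mp hj).2)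
    · simpa [hx i] using abs_real_inner_le_norm (x i) δ
  have hfit : ∑ i ∈ S \ S', ⟪x i, Δ⟫ * ⟪x i, δ⟫
      ≤ √(∑ i ∈ S \ S', ⟪x i, Δ⟫ ^ 2) * √(∑ i ∈ S \ S', ⟪x i, δ⟫ ^ 2) :=
    Real.sum_mul_le_sqrt_mul_sqrt _ _ _
  calc ∑ i ∈ S \ S', ε i * ⟪x i, δ⟫
        = ∑ i ∈ S \ S', (ε i - ⟪x i, Δ⟫) * ⟪x i, δ⟫ + ∑ i ∈ S \ S', ⟪x i, Δ⟫ * ⟪x i, δ⟫ := by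
          rw [← Finset.sum_add_distrib]; simp only [sub_mul, sub_add_cancel]
    _ ≤ ‖δ‖ * ∑ j ∈ S' \ S, |ε j| + 2 * P * ‖Δ‖ * ‖δ‖ := by linarith

theorem psiMinus_mul_norm_sub_le (hx : ∀ i, ‖x i‖ = 1) {S S' : Finset (Fin n)}
    (hψ : 0 < psiMinus x S.card) (hcard : S.card = S'.card) {y ε : Fin n → ℝ}
    {β βstar β' : EuclideanSpace ℝ (Fin d)} (hε : ∀ i, ε i = y i - ⟪x i, βstar⟫)
    (hsel : ∀ i ∈ S, ∀ j ∉ S, (y i - ⟪x i, β⟫) ^ 2 ≤ (y j - ⟪x j, β⟫) ^ 2)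
    (hβ' : ∀ j, β' j = (gramMatrix x S)⁻¹.mulVec (fun l => ∑ i ∈ S, y i * x i l) j) :
    psiMinus x S.card * ‖β' - βstar‖
      ≤ ∑ i ∈ S', |ε i| + 2 * psiPlus x (S \ S').card * ‖β - βstar‖ := by
  have hresidual : ∀ i, y i - ⟪x i, β⟫ = ε i - ⟪x i, β - βstar⟫ := fun i => by
    rw [hε, inner_sub_right]; ring
  simp only [hresidual] at hsel
  have hquad := psiMinus_mul_norm_sq_le x hψ hε hβ'
  have hinter := sum_mul_inner_le_of_norm_eq_one hx (S ∩ S') ε (β' - βstar)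
  have hdiff := sum_mul_inner_sdiff_le hx hcard ε (β - βstar) (β' - βstar) hsel
  have hsplit := Finset.sum_inter_add_sum_sdiff S S' fun i => ε i * ⟪x i, β' - βstar⟫
  have hεsplit := Finset.sum_inter_add_sum_sdiff S' S fun i => |ε i|
  rw [Finset.inter_comm] at hεsplit
  have hsq : psiMinus x S.card * ‖β' - βstar‖ ^ 2
      ≤ ‖β' - βstar‖ * (∑ i ∈ S', |ε i| + 2 * psiPlus x (S \ S').card * ‖β - βstar‖) := by
    rw [← hεsplit]; linarith
  rcases (norm_nonneg (β' - βstar)).eq_or_lt with h0 | hpos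
  · rw [← h0, mul_zero]
    have := psiPlus_nonneg x (S \ S').card
    positivity
  · exact le_of_mul_le_mul_right (by linarith) hpos

end trimming

lemma EuclideanSpace.sum_mul_eq_inner {ι : Type*} [Fintype ι] (u v : EuclideanSpace ℝ ι) :
    ∑ j, u j * v j = ⟪u, v⟫ := by
  simp [PiLp.inner_apply, mul_comm]

theorem stmt14_general (n d : ℕ) (x : Fin n → EuclideanSpace ℝ (Fin d))
    (hx : ∀ i, ‖x i‖ = 1)
    (β βstar : EuclideanSpace ℝ (Fin d)) (y : Fin n → ℝ)
    (ε : Fin n → ℝ) (hε : ∀ i, ε i = y i - ∑ j, x i j * βstar j)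
    (m : ℕ) (hψ : 0 < psiMinus x m)
    (S : Finset (Fin n)) (hScard : S.card = m)
    (hsel : ∀ i ∈ S, ∀ j ∉ S,
      (y i - ∑ l, x i l * β l) ^ 2 ≤ (y j - ∑ l, x j l * β l) ^ 2)
    -- β' = (X_Sᵀ X_S)⁻¹ X_Sᵀ y_S, the least squares estimate on S
    (β' : EuclideanSpace ℝ (Fin d))
    (hβ' : ∀ j, β' j = (gramMatrix x S)⁻¹.mulVec (fun l => ∑ i ∈ S, y i * x i l) j)
    (Sstar : Finset (Fin n)) (hSstarcard : Sstar.card = m) :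
    ‖β' - βstar‖
      ≤ (2 * psiPlus x (S \ Sstar).card / psiMinus x m) * ‖β - βstar‖
        + (∑ i ∈ Sstar, |ε i|) / psiMinus x m := by
  simp only [EuclideanSpace.sum_mul_eq_inner] at hε hsel
  subst hScard
  have hbound := psiMinus_mul_norm_sub_le hx hψ hSstarcard.symm hε hsel hβ'
  rw [div_mul_eq_mul_div, ← add_div, le_div_iff₀ hψ]
  linarith

theorem stmt14 (n d : ℕ) (x : Fin n → EuclideanSpace ℝ (Fin d))
    (hx : ∀ i, ‖x i‖ = 1)
    (β βstar : EuclideanSpace ℝ (Fin d)) (y : Fin n → ℝ)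
    (ε : Fin n → ℝ) (hε : ∀ i, ε i = y i - ∑ j, x i j * βstar j)
    (m : ℕ) (hm : 1 ≤ m) (hmn : m ≤ n) (hψ : 0 < psiMinus x m)
    (S : Finset (Fin n)) (hScard : S.card = m)
    (hsel : ∀ i ∈ S, ∀ j ∉ S,
      (y i - ∑ l, x i l * β l) ^ 2 ≤ (y j - ∑ l, x j l * β l) ^ 2)
    -- β' = (X_Sᵀ X_S)⁻¹ X_Sᵀ y_S, the least squares estimate on S
    (β' : EuclideanSpace ℝ (Fin d))
    (hβ' : ∀ j, β' j = (gramMatrix x S)⁻¹.mulVec (fun l => ∑ i ∈ S, y i * x i l) j)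
    (Sstar : Finset (Fin n)) (hSstarcard : Sstar.card = m) :
    ‖β' - βstar‖
      ≤ (2 * psiPlus x (S \ Sstar).card / psiMinus x m) * ‖β - βstar‖
        + (∑ i ∈ Sstar, |ε i|) / psiMinus x m :=
  stmt14_general n d x hx β βstar y ε hε m hψ S hScard hsel β' hβ' Sstar hSstarcard
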